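/- Let X, A be metrizable spaces with A compact, φ : X × [0,∞) → X continuous, and l : X × A → X continuous. Extend the state space to X_Δ = X ∪ {Δ} with Δ an added isolated point, and let B = [0,∞] × A with [0,∞] the one-point compactification of [0,∞). Define the transition map on the extended space X̂ = ([0,∞) × X) ∪ {(∞,Δ)} (with the metric ρ̂ making (sₙ,xₙ) → (∞,Δ) iff sₙ → ∞) by T((s,x),(θ,a)) = (s+θ, l(φ(x,θ),a)) if s + θ < ∞ and T((s,x),(θ,a)) = (∞,Δ) otherwise. Then for every bounded continuous function f on X̂, the map ((s,x),(θ,a)) ↦ f(T((s,x),(θ,a))) is continuous on X̂ × B. -/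

import Mathlib

/-!
The transition map `T` is itself continuous. Wherever `T` lands on the cemetery point
`(∞, Δ)` (at `(∞, Δ)` itself, or at `θ = ∞`), its `ρ̂`-distance to the cemetery is at most
`min (ρ̂(p, (∞, Δ))) (1 / (θ + 1))`, a continuous bound vanishing there. Elsewhere, `ρ̂`
induces the product topology on `[0,∞) × X`, because the weight `1 - max (g s) (g t)` stays
away from `0` near any finite time; so the pairs form an open subspace on which `T` is a
composition of continuous maps.
-/

open scoped NNReal ENNReal

/-- `g(s) = s/(s+1)`, mapping `[0,∞)` into `[0,1)`. -/
noncomputable def g (s : ℝ≥0) : ℝ := (s : ℝ) / ((s : ℝ) + 1)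

/-- The metric `ρ̂` on `X̂ = ([0,∞) × X) ∪ {Δ∞}`, where `Δ∞` is encoded as `none`
and a pair `(s, x)` as `some (s, x)`. -/
noncomputable def hatDist {X : Type*} [MetricSpace X] :
    Option (ℝ≥0 × X) → Option (ℝ≥0 × X) → ℝ
  | some p, some q => dist p.2 q.2 * (1 - max (g p.1) (g q.1)) + |g p.1 - g q.1|
  | some p, none => 1 - g p.1
  | none, some q => 1 - g q.1
  | none, none => 0

/-- The transition map of the auxiliary MDP on `X̂ = ([0,∞) × X) ∪ {(∞,Δ)}`:
`T((s,x),(θ,a)) = (s+θ, l(φ(x,θ),a))` if `s + θ < ∞`, and `(∞,Δ)` otherwise. -/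
noncomputable def Tmap {X A : Type*} (φ : X → ℝ≥0 → X) (l : X → A → X) :
    Option (ℝ≥0 × X) → ℝ≥0∞ × A → Option (ℝ≥0 × X)
  | some p, q => if q.1 ≠ ∞ then some (p.1 + q.1.toNNReal, l (φ p.2 q.1.toNNReal) q.2)
      else none
  | none, _ => none

open Filter Topology

lemma one_sub_g (s : ℝ≥0) : 1 - g s = ((s : ℝ) + 1)⁻¹ := by
  rw [g]; field_simp; ring

lemma g_lt_one (s : ℝ≥0) : g s < 1 := by
  have := one_sub_g s
  have : (0 : ℝ) < ((s : ℝ) + 1)⁻¹ := by positivity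
  linarith

lemma g_mono : Monotone g := by
  intro a b hab
  have := one_sub_g a
  have := one_sub_g b
  have : ((b : ℝ) + 1)⁻¹ ≤ ((a : ℝ) + 1)⁻¹ := by gcongr
  linarith

lemma one_sub_max_g_pos (s t : ℝ≥0) : 0 < 1 - max (g s) (g t) := by
  linarith [max_lt (g_lt_one s) (g_lt_one t)]

@[fun_prop]
lemma continuous_g : Continuous g := by
  unfold g; fun_prop (disch := intro s; positivity)

lemma coe_eq_inv_one_sub_g_sub_one (s : ℝ≥0) : (s : ℝ) = (1 - g s)⁻¹ - 1 := by
  rw [one_sub_g, inv_inv]; ring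

lemma one_sub_g_eq_toReal (s : ℝ≥0) : 1 - g s = (((s : ℝ≥0∞) + 1)⁻¹).toReal := by
  rw [one_sub_g, ENNReal.toReal_inv, ENNReal.toReal_add (by simp) (by simp)]
  simp

section HatDist

variable {X : Type*} [MetricSpace X]

lemma tendsto_hatDist_some_iff {ι : Type*} {L : Filter ι} {q : ι → ℝ≥0 × X} {p₀ : ℝ≥0 × X} :
    Tendsto (fun i => hatDist (some (q i)) (some p₀)) L (𝓝 0) ↔ Tendsto q L (𝓝 p₀) := by
  obtain ⟨t, x₀⟩ := p₀
  simp only [hatDist]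
  constructor
  · intro h
    have hg : Tendsto (fun i => g (q i).1) L (𝓝 (g t)) := by
      rw [tendsto_iff_dist_tendsto_zero]
      refine squeeze_zero (fun _ => dist_nonneg) (fun i => ?_) h
      rw [Real.dist_eq]
      exact le_add_of_nonneg_left (mul_nonneg dist_nonneg (one_sub_max_g_pos _ t).le)
    have ht : Tendsto (fun i => (q i).1) L (𝓝 t) := by
      rw [← NNReal.tendsto_coe]
      have hinv := ((hg.const_sub 1).inv₀ (sub_ne_zero.2 (g_lt_one t).ne')).sub_const 1
      simpa only [← coe_eq_inv_one_sub_g_sub_one] using hinv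
    have hx : Tendsto (fun i => (q i).2) L (𝓝 x₀) := by
      have hden : Tendsto (fun i => 1 - max (g (q i).1) (g t)) L (𝓝 (1 - g t)) := by
        simpa using (hg.max (tendsto_const_nhds (x := g t))).const_sub 1
      have hnum : Tendsto (fun i => dist (q i).2 x₀ * (1 - max (g (q i).1) (g t))) L (𝓝 0) :=
        squeeze_zero (fun i => mul_nonneg dist_nonneg (one_sub_max_g_pos _ t).le)
          (fun i => le_add_of_nonneg_right (abs_nonneg _)) h
      rw [tendsto_iff_dist_tendsto_zero]
      have := hnum.div hden (sub_ne_zero.2 (g_lt_one t).ne')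
      rw [zero_div] at this
      refine this.congr fun i => ?_
      rw [Pi.div_apply, mul_div_cancel_right₀ _ (one_sub_max_g_pos _ t).ne']
    exact ht.prodMk_nhds hx
  · intro h
    have hcont : Continuous fun p : ℝ≥0 × X => dist p.2 x₀ * (1 - max (g p.1) (g t)) + |g p.1 - g t| := by
      fun_prop
    simpa [Function.comp_def] using (hcont.tendsto (t, x₀)).comp h

end HatDist

section Tmap

variable {X A : Type*} [MetricSpace X] [MetricSpace (Option (ℝ≥0 × X))]

lemma tendsto_some_iff (hm : ∀ p q : Option (ℝ≥0 × X), dist p q = hatDist p q)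
    {ι : Type*} {L : Filter ι} {q : ι → ℝ≥0 × X} {p₀ : ℝ≥0 × X} :
    Tendsto (fun i => some (q i)) L (𝓝 (some p₀)) ↔ Tendsto q L (𝓝 p₀) := by
  simp only [tendsto_iff_dist_tendsto_zero (a := some p₀), hm, tendsto_hatDist_some_iff]

lemma isOpenEmbedding_some (hm : ∀ p q : Option (ℝ≥0 × X), dist p q = hatDist p q) :
    IsOpenEmbedding (some : ℝ≥0 × X → Option (ℝ≥0 × X)) := by
  refine ⟨⟨isInducing_iff_nhds.2 fun p₀ => le_antisymm ?_ ?_, Option.some_injective _⟩, ?_⟩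
  · exact tendsto_iff_comap.1 ((tendsto_some_iff hm).2 tendsto_id)
  · exact (tendsto_some_iff hm).1 tendsto_comap
  · rw [← isClosed_compl_iff, Set.compl_range_some]
    exact isClosed_singleton

lemma dist_Tmap_none_le (hm : ∀ p q : Option (ℝ≥0 × X), dist p q = hatDist p q)
    (φ : X → ℝ≥0 → X) (l : X → A → X) (p : Option (ℝ≥0 × X)) (q : ℝ≥0∞ × A) :
    dist (Tmap φ l p q) none ≤ min (dist p none) ((q.1 + 1)⁻¹).toReal := by
  obtain _ | ⟨s, x⟩ := p
  · simp [Tmap]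
  obtain ⟨θ, a⟩ := q
  by_cases hθ : θ = ∞
  · simp [Tmap, hθ, hm, hatDist, (g_lt_one s).le]
  lift θ to ℝ≥0 using hθ
  simp only [Tmap, ne_eq, ENNReal.coe_ne_top, not_false_eq_true, ↓reduceIte, ENNReal.toNNReal_coe,
    hm, hatDist, ← one_sub_g_eq_toReal, le_min_iff]
  constructor <;> gcongr 1 - ?_ <;> apply g_mono
  exacts [le_self_add, le_add_self]

lemma continuousAt_Tmap_of_eq_none [TopologicalSpace A]
    (hm : ∀ p q : Option (ℝ≥0 × X), dist p q = hatDist p q)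
    (φ : X → ℝ≥0 → X) (l : X → A → X) {p : Option (ℝ≥0 × X)} {θ : ℝ≥0∞} (a : A)
    (h : p = none ∨ θ = ∞) :
    ContinuousAt (fun q : Option (ℝ≥0 × X) × (ℝ≥0∞ × A) => Tmap φ l q.1 q.2) (p, θ, a) := by
  have hT : Tmap φ l p (θ, a) = none := by
    rcases h with rfl | rfl
    · rfl
    · cases p <;> simp [Tmap]
  have hbound : ContinuousAt (fun q : Option (ℝ≥0 × X) × (ℝ≥0∞ × A) =>
      min (dist q.1 none) ((q.2.1 + 1)⁻¹).toReal) (p, θ, a) := by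
    refine (continuous_fst.dist continuous_const).continuousAt.min ?_
    refine (ENNReal.tendsto_toReal (by simp)).comp ?_
    exact ((continuous_inv.comp (continuous_add_const 1)).comp
      (continuous_fst.comp continuous_snd)).continuousAt
  have hbound0 : min (dist p none) ((θ + 1)⁻¹).toReal = 0 := by
    rcases h with rfl | rfl <;> simp
  rw [ContinuousAt, hT, tendsto_iff_dist_tendsto_zero]
  refine squeeze_zero (fun _ => dist_nonneg) (fun q => dist_Tmap_none_le hm φ l q.1 q.2) ?_
  simpa only [ContinuousAt, hbound0] using hbound

lemma continuousAt_Tmap_some [TopologicalSpace A]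
    (hm : ∀ p q : Option (ℝ≥0 × X), dist p q = hatDist p q)
    {φ : X → ℝ≥0 → X} (hφ : Continuous fun p : X × ℝ≥0 => φ p.1 p.2)
    {l : X → A → X} (hl : Continuous fun p : X × A => l p.1 p.2)
    (p : ℝ≥0 × X) {θ : ℝ≥0∞} (a : A) (hθ : θ ≠ ∞) :
    ContinuousAt (fun q : Option (ℝ≥0 × X) × (ℝ≥0∞ × A) => Tmap φ l q.1 q.2) (some p, θ, a) := by
  have he := (isOpenEmbedding_some hm).prodMap (IsOpenEmbedding.id (X := ℝ≥0∞ × A))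
  refine (he.continuousAt_iff (x := (p, θ, a))).1 ?_
  have hfinite : ∀ᶠ q : (ℝ≥0 × X) × (ℝ≥0∞ × A) in 𝓝 (p, θ, a),
      Tmap φ l (some q.1) q.2 = some (q.1.1 + q.2.1.toNNReal, l (φ q.1.2 q.2.1.toNNReal) q.2.2) :=
    mem_of_superset
      ((ENNReal.isOpen_ne_top.preimage (continuous_fst.comp continuous_snd)).mem_nhds hθ)
      fun q hq => by simp [Tmap, show q.2.1 ≠ ∞ from hq]
  refine ContinuousAt.congr ?_ (hfinite.mono fun q hq => hq.symm)
  have htime : ContinuousAt (fun q : (ℝ≥0 × X) × (ℝ≥0∞ × A) => q.2.1.toNNReal) (p, θ, a) :=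
    (ENNReal.tendsto_toNNReal hθ).comp (continuous_fst.comp continuous_snd).continuousAt
  have hflow : ContinuousAt (fun q : (ℝ≥0 × X) × (ℝ≥0∞ × A) => φ q.1.2 q.2.1.toNNReal) (p, θ, a) :=
    hφ.continuousAt.comp (continuous_fst.snd.continuousAt.prodMk htime)
  have hjump : ContinuousAt
      (fun q : (ℝ≥0 × X) × (ℝ≥0∞ × A) => l (φ q.1.2 q.2.1.toNNReal) q.2.2) (p, θ, a) :=
    hl.continuousAt.comp (hflow.prodMk continuous_snd.snd.continuousAt)
  exact (isOpenEmbedding_some hm).continuous.continuousAt.comp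
    ((continuous_fst.fst.continuousAt.add htime).prodMk hjump)

theorem continuous_Tmap [TopologicalSpace A]
    (hm : ∀ p q : Option (ℝ≥0 × X), dist p q = hatDist p q)
    {φ : X → ℝ≥0 → X} (hφ : Continuous fun p : X × ℝ≥0 => φ p.1 p.2)
    {l : X → A → X} (hl : Continuous fun p : X × A => l p.1 p.2) :
    Continuous fun q : Option (ℝ≥0 × X) × (ℝ≥0∞ × A) => Tmap φ l q.1 q.2 := by
  refine continuous_iff_continuousAt.2 fun ⟨p, θ, a⟩ => ?_
  by_cases h : p = none ∨ θ = ∞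
  · exact continuousAt_Tmap_of_eq_none hm φ l a h
  · obtain ⟨hp, hθ⟩ := not_or.1 h
    obtain ⟨p, rfl⟩ := Option.ne_none_iff_exists'.1 hp
    exact continuousAt_Tmap_some hm hφ hl p a hθ

end Tmap

theorem stmt_13_general {X A : Type*} [MetricSpace X]
    [TopologicalSpace A]
    [m : MetricSpace (Option (ℝ≥0 × X))]
    (hm : ∀ p q : Option (ℝ≥0 × X), dist p q = hatDist p q)
    (φ : X → ℝ≥0 → X) (hφ : Continuous fun p : X × ℝ≥0 => φ p.1 p.2)
    (l : X → A → X) (hl : Continuous fun p : X × A => l p.1 p.2)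
    (f : Option (ℝ≥0 × X) → ℝ) (hf : Continuous f) :
    Continuous fun q : Option (ℝ≥0 × X) × (ℝ≥0∞ × A) => f (Tmap φ l q.1 q.2) :=
  hf.comp (continuous_Tmap hm hφ hl)

/-- For a continuous flow `φ` and continuous jump map `l`, and any bounded continuous
function `f` on `X̂` (with the metric `ρ̂`), the map
`((s,x),(θ,a)) ↦ f(T((s,x),(θ,a)))` is continuous on `X̂ × B`, `B = [0,∞] × A`. -/
theorem stmt_13 {X A : Type*} [MetricSpace X]
    [TopologicalSpace A] [CompactSpace A] [TopologicalSpace.MetrizableSpace A]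
    (hρ : ∀ x y : X, dist x y ≤ 2)
    [m : MetricSpace (Option (ℝ≥0 × X))]
    (hm : ∀ p q : Option (ℝ≥0 × X), dist p q = hatDist p q)
    (φ : X → ℝ≥0 → X) (hφ : Continuous fun p : X × ℝ≥0 => φ p.1 p.2)
    (l : X → A → X) (hl : Continuous fun p : X × A => l p.1 p.2)
    (f : Option (ℝ≥0 × X) → ℝ) (hf : Continuous f) (hfb : ∃ M, ∀ p, |f p| ≤ M) :
    Continuous fun q : Option (ℝ≥0 × X) × (ℝ≥0∞ × A) => f (Tmap φ l q.1 q.2) :=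
  stmt_13_general (m := m) hm φ hφ l hl f hf
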